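/- arXiv:1512.01466 — 3 statements merged into one kernel-verified Lean document; each statement's English description precedes it below -/
import Mathlib

section
/- Let $f_1, f_2$ be $k$-periodic functions from $\mathbb{Z}$ to $\mathbb{C}$ and let $h_1, h_2 \in \mathbb{Z}$ with $\gcd(h_1,k) = \gcd(h_2,k) = 1$. Then $\sum_{a=0}^{k-1} f_1(a h_1) f_2(a h_2) = \frac{1}{k} \sum_{a=0}^{k-1} \widehat{f_1}(-a h_2) \widehat{f_2}(a h_1)$. -/
/-!
On `ZMod k`, Fourier inversion `Ψ z = k⁻¹ ∑ y, e(y z) 𝓕 Ψ y`, with `e(t) = exp(2πi t / k)`,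
turns `∑ x, Φ x Ψ (x c)` into `k⁻¹ ∑ y, 𝓕 Φ (-(y c)) 𝓕 Ψ y` for every `c`. When `h₁` is a unit
modulo `k`, substituting `x ↦ x h₁` and `y ↦ y h₁` gives the identity for the `k`-periodic `fᵢ`,
read as functions on `ZMod k`.
-/

open Finset Complex
open scoped ZMod

/-- Discrete Fourier transform of a `k`-periodic function `f : ℤ → ℂ`. -/
noncomputable def dft (k : ℕ) (f : ℤ → ℂ) (n : ℤ) : ℂ :=
  ∑ a ∈ Finset.range k, f a * Complex.exp (-(2 * (Real.pi : ℂ) * Complex.I * a * n) / k)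

theorem ZMod.isUnit_intCast_of_gcd_eq_one {k : ℕ} {h : ℤ} (hh : Int.gcd h k = 1) :
    IsUnit (h : ZMod k) := by
  obtain ⟨u, v, huv⟩ := Int.isCoprime_iff_gcd_eq_one.mpr hh
  refine IsUnit.of_mul_eq_one (u : ZMod k) ?_
  simpa [mul_comm] using congrArg (Int.cast : ℤ → ZMod k) huv

theorem Finset.sum_range_eq_sum_zmod_val {M : Type*} [AddCommMonoid M] {k : ℕ} [NeZero k]
    (g : ℕ → M) :
    ∑ a ∈ range k, g a = ∑ x : ZMod k, g x.val := by
  symm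
  exact sum_nbij (·.val) (fun x _ => mem_range.2 x.val_lt) (ZMod.val_injective k).injOn
    (fun a ha => ⟨a, mem_univ _, ZMod.val_cast_of_lt (mem_range.1 ha)⟩) fun _ _ => rfl

theorem Function.Periodic.apply_val_intCast {k : ℕ} [NeZero k] {α : Type*} {f : ℤ → α}
    (hf : Function.Periodic f k) (n : ℤ) : f ((n : ZMod k).val) = f n := by
  rw [ZMod.val_intCast, Int.emod_def, mul_comm]
  simpa using hf.sub_int_mul_eq (x := n) (n / k)

namespace ZMod

variable {N : ℕ} [NeZero N]

theorem sum_mul_dilate_eq_sum_dft (Φ Ψ : ZMod N → ℂ) (c : ZMod N) :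
    ∑ x, Φ x * Ψ (x * c) = (N : ℂ)⁻¹ * ∑ y, 𝓕 Φ (-(y * c)) * 𝓕 Ψ y := by
  have inversion (z : ZMod N) : Ψ z = (N : ℂ)⁻¹ * ∑ y, stdAddChar (y * z) * 𝓕 Ψ y := by
    simpa [invDFT_apply] using (congrFun (dft.symm_apply_apply Ψ) z).symm
  calc ∑ x, Φ x * Ψ (x * c)
      = ∑ x, Φ x * ((N : ℂ)⁻¹ * ∑ y, stdAddChar (y * (x * c)) * 𝓕 Ψ y) := by
        simp_rw [← inversion]
    _ = (N : ℂ)⁻¹ * ∑ y, (∑ x, stdAddChar (-(x * -(y * c))) * Φ x) * 𝓕 Ψ y := by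
        simp only [mul_sum, sum_mul]
        rw [sum_comm]
        refine sum_congr rfl fun y _ => sum_congr rfl fun x _ => ?_
        rw [show -(x * -(y * c)) = y * (x * c) by ring]
        ring
    _ = (N : ℂ)⁻¹ * ∑ y, 𝓕 Φ (-(y * c)) * 𝓕 Ψ y := rfl

theorem sum_dilate_mul_dilate_eq_sum_dft (Φ Ψ : ZMod N → ℂ) (u : (ZMod N)ˣ) (c : ZMod N) :
    ∑ x, Φ (x * u) * Ψ (x * c) = (N : ℂ)⁻¹ * ∑ y, 𝓕 Φ (-(y * c)) * 𝓕 Ψ (y * u) := by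
  calc ∑ x, Φ (x * u) * Ψ (x * c) = ∑ x, Φ x * Ψ (x * (↑u⁻¹ * c)) :=
        Fintype.sum_equiv (Units.mulRight u) _ _ fun x => by simp [mul_assoc]
    _ = (N : ℂ)⁻¹ * ∑ y, 𝓕 Φ (-(y * (↑u⁻¹ * c))) * 𝓕 Ψ y := sum_mul_dilate_eq_sum_dft Φ Ψ _
    _ = _ := by
        congr 1
        exact (Fintype.sum_equiv (Units.mulRight u) _ _ fun y => by simp [mul_assoc]).symm

end ZMod

theorem dft_eq_dft_comp_val {k : ℕ} [NeZero k] (f : ℤ → ℂ) (n : ℤ) :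
    dft k f n = 𝓕 (fun x : ZMod k => f x.val) n := by
  rw [dft, sum_range_eq_sum_zmod_val, ZMod.dft_apply]
  refine sum_congr rfl fun x _ => ?_
  rw [smul_eq_mul, mul_comm, show -(x * (n : ZMod k)) = ((-(x.val * n) : ℤ) : ZMod k) by simp,
    ZMod.stdAddChar_coe]
  push_cast
  ring_nf

theorem parseval_two_general (k : ℕ) (f₁ f₂ : ℤ → ℂ)
    (hf₁ : ∀ n, f₁ (n + k) = f₁ n) (hf₂ : ∀ n, f₂ (n + k) = f₂ n)
    (h₁ h₂ : ℤ) (hco₁ : Int.gcd h₁ k = 1) :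
    ∑ a ∈ Finset.range k, f₁ (a * h₁) * f₂ (a * h₂)
      = (1 / k) * ∑ a ∈ Finset.range k, dft k f₁ (-(a : ℤ) * h₂) * dft k f₂ ((a : ℤ) * h₁) := by
  rcases k.eq_zero_or_pos with rfl | hk
  · simp
  have : NeZero k := ⟨hk.ne'⟩
  obtain ⟨u, hu⟩ := ZMod.isUnit_intCast_of_gcd_eq_one hco₁
  calc ∑ a ∈ range k, f₁ (a * h₁) * f₂ (a * h₂)
      = ∑ x : ZMod k, f₁ (x * u : ZMod k).val * f₂ (x * h₂ : ZMod k).val := by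
        rw [sum_range_eq_sum_zmod_val, hu]
        refine sum_congr rfl fun x _ => ?_
        rw [← Function.Periodic.apply_val_intCast hf₁, ← Function.Periodic.apply_val_intCast hf₂]
        simp
    _ = (k : ℂ)⁻¹ * ∑ y : ZMod k, 𝓕 (fun x : ZMod k => f₁ x.val) (-(y * h₂))
          * 𝓕 (fun x : ZMod k => f₂ x.val) (y * u) :=
        ZMod.sum_dilate_mul_dilate_eq_sum_dft (fun x => f₁ x.val) (fun x => f₂ x.val) u h₂
    _ = _ := by
        rw [one_div, sum_range_eq_sum_zmod_val, hu]
        simp [dft_eq_dft_comp_val]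

theorem parseval_two (k : ℕ) (hk : 0 < k) (f₁ f₂ : ℤ → ℂ)
    (hf₁ : ∀ n, f₁ (n + k) = f₁ n) (hf₂ : ∀ n, f₂ (n + k) = f₂ n)
    (h₁ h₂ : ℤ) (hco₁ : Int.gcd h₁ k = 1) (hco₂ : Int.gcd h₂ k = 1) :
    ∑ a ∈ Finset.range k, f₁ (a * h₁) * f₂ (a * h₂)
      = (1 / k) * ∑ a ∈ Finset.range k, dft k f₁ (-(a : ℤ) * h₂) * dft k f₂ ((a : ℤ) * h₁) :=
  parseval_two_general k f₁ f₂ hf₁ hf₂ h₁ h₂ hco₁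
end

section
/- Let $k \in \mathbb{N}$ and let $f(n) = ((n/k))$ be the $k$-periodic sawtooth function. Then the DFT of $f$ satisfies $\widehat{f}(n) = \frac{i}{2} \cot(\pi n / k)$ if $k \nmid n$, and $\widehat{f}(n) = 0$ if $k \mid n$. -/
open scoped Classical

/-- The sawtooth function `((x))`. -/
noncomputable def saw (x : ℝ) : ℝ :=
  if ∃ m : ℤ, x = m then 0 else Int.fract x - 1 / 2

/-!
Write `w = exp (-2πin/k)`. Since `saw (a/k) = a/k - 1/2` for `0 < a < k` and `saw 0 = 0`, the
transform equals `(∑ a w^a)/k - (∑ w^a)/2 + 1/2`. If `k ∣ n` then `w = 1` and this is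
`(k-1)/2 - k/2 + 1/2 = 0`. Otherwise `w` is a `k`-th root of unity other than `1`, so `∑ w^a = 0`
and `(w - 1) ∑ a w^a = k`; the transform is `1/(w-1) + 1/2 = (w+1)/(2(w-1))`, which is
`(i/2) cot(πn/k)` because `w = exp (-2iθ)` with `θ = πn/k`.
-/

open Finset Complex

theorem sub_one_mul_sum_range_mul_pow {R : Type*} [CommRing R] (w : R) (k : ℕ) :
    (w - 1) * ∑ a ∈ range k, (a : R) * w ^ a = k * w ^ k - ∑ a ∈ range k, w ^ (a + 1) := by
  induction k with
  | zero => simp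
  | succ k ih =>
    rw [sum_range_succ, sum_range_succ, mul_add, ih]
    push_cast
    ring

theorem sum_range_mul_pow_of_pow_eq_one {K : Type*} [Field K] {w : K} {k : ℕ} (hw : w ≠ 1)
    (hwk : w ^ k = 1) : ∑ a ∈ range k, (a : K) * w ^ a = k / (w - 1) := by
  have hgeom : ∑ a ∈ range k, w ^ (a + 1) = 0 := by
    simp only [pow_succ, ← sum_mul, geom_sum_eq hw, hwk, sub_self, zero_div, zero_mul]
  rw [eq_div_iff (sub_ne_zero.mpr hw), mul_comm, sub_one_mul_sum_range_mul_pow, hgeom, hwk,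
    mul_one, sub_zero]

theorem sum_range_natCast_mul_two {R : Type*} [CommRing R] (k : ℕ) :
    (∑ a ∈ range k, (a : R)) * 2 = k * (k - 1) := by
  induction k with
  | zero => simp
  | succ k ih =>
    rw [sum_range_succ, add_mul, ih]
    push_cast
    ring

theorem saw_natCast_div {a k : ℕ} (hak : a < k) :
    saw (a / k) = if a = 0 then 0 else (a / k : ℝ) - 1 / 2 := by
  split_ifs with ha
  · simp only [ha, Nat.cast_zero, zero_div, saw]
    exact if_pos ⟨0, by simp⟩
  have hk : (0 : ℝ) < k := by exact_mod_cast (Nat.zero_le a).trans_lt hak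
  have hpos : (0 : ℝ) < a / k := div_pos (by exact_mod_cast Nat.pos_of_ne_zero ha) hk
  have hlt : (a / k : ℝ) < 1 := (div_lt_one hk).mpr (by exact_mod_cast hak)
  have hfract : Int.fract (a / k : ℝ) = a / k := Int.fract_eq_self.mpr ⟨hpos.le, hlt⟩
  have hnot_int : ¬∃ m : ℤ, (a / k : ℝ) = m := by
    rintro ⟨m, hm⟩
    rw [hm, Int.fract_intCast] at hfract
    rw [hm, ← hfract] at hpos
    exact hpos.false
  rw [saw, if_neg hnot_int, hfract]

theorem sum_saw_natCast_div_mul_pow {k : ℕ} (hk : 0 < k) (w : ℂ) :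
    ∑ a ∈ range k, (saw (a / k) : ℂ) * w ^ a
      = (∑ a ∈ range k, (a : ℂ) * w ^ a) / k - (∑ a ∈ range k, w ^ a) / 2 + 1 / 2 := by
  have hterm : ∀ a ∈ range k, (saw (a / k) : ℂ) * w ^ a
      = (a * w ^ a / k - w ^ a / 2) + if a = 0 then 1 / 2 else 0 := by
    intro a ha
    rw [saw_natCast_div (mem_range.mp ha)]
    split_ifs with h0
    · simp [h0]
    · push_cast
      ring
  rw [sum_congr rfl hterm, sum_add_distrib, sum_sub_distrib, sum_ite_eq',
    if_pos (mem_range.mpr hk), ← sum_div, ← sum_div]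

theorem I_mul_cot_eq_exp_neg_ratio (z : ℂ) :
    I * cot z = (exp (-(2 * I * z)) + 1) / (exp (-(2 * I * z)) - 1) := by
  have hcot_neg : cot (-z) = -cot z := by simp [cot_eq_cos_div_sin, div_neg]
  have hexp := Complex.cot_eq_exp_ratio (-z)
  rw [hcot_neg, mul_neg, neg_eq_iff_eq_neg] at hexp
  rw [hexp, mul_neg, mul_div_assoc', mul_div_mul_left _ _ I_ne_zero, ← div_neg, neg_sub]

theorem dft_eq_sum_mul_pow (k : ℕ) (f : ℤ → ℂ) (n : ℤ) :
    dft k f n = ∑ a ∈ range k, f a * (exp (2 * Real.pi * I / k) ^ (-n)) ^ a := by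
  refine sum_congr rfl fun a _ => ?_
  rw [← exp_int_mul, ← exp_nat_mul]
  congr 2
  push_cast
  ring

theorem dft_saw (k : ℕ) (hk : 0 < k) (n : ℤ) :
    dft k (fun m => (saw ((m : ℝ) / k) : ℂ)) n =
      if (k : ℤ) ∣ n then 0
      else (Complex.I / 2) *
        ((Real.cos (Real.pi * n / k) / Real.sin (Real.pi * n / k) : ℝ) : ℂ) := by
  rw [dft_eq_sum_mul_pow]
  simp only [Int.cast_natCast]
  rw [sum_saw_natCast_div_mul_pow hk]
  have hζ := isPrimitiveRoot_exp k hk.ne'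
  set w := exp (2 * Real.pi * I / k) ^ (-n) with hw
  have hwk : w ^ k = 1 := by
    rw [← zpow_natCast, ← zpow_mul, mul_comm (-n), zpow_mul, zpow_natCast, hζ.pow_eq_one,
      one_zpow]
  have hw_one : w = 1 ↔ (k : ℤ) ∣ n := by rw [hζ.zpow_eq_one_iff_dvd, dvd_neg]
  have hk' : (k : ℂ) ≠ 0 := by exact_mod_cast hk.ne'
  split_ifs with hdvd
  · rw [hw_one.mpr hdvd]
    simp only [one_pow, mul_one, sum_const, card_range, nsmul_one]
    field_simp
    linear_combination sum_range_natCast_mul_two (R := ℂ) k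
  · have hw1 : w ≠ 1 := mt hw_one.mp hdvd
    have hw_exp : w = exp (-(2 * I * ((Real.pi * n / k : ℝ) : ℂ))) := by
      rw [hw, ← exp_int_mul]
      congr 1
      push_cast
      ring
    rw [sum_range_mul_pow_of_pow_eq_one hw1 hwk, geom_sum_eq hw1, hwk, sub_self, zero_div,
      zero_div, sub_zero, ← Real.cot_eq_cos_div_sin, ofReal_cot, div_mul_eq_mul_div,
      I_mul_cot_eq_exp_neg_ratio, ← hw_exp]
    field_simp
    ring
end

section
/- Let $k \in \mathbb{N}$ and $s \in \mathbb{C}$ with $\Re s > 1$. The DFT of the $k$-periodic function $f(n) = F(s, n/k)$, where $F$ is the periodic zeta function, satisfies $\widehat{f}(n) = k^{1-s} \zeta(s, \{n/k\})$ if $k \nmid n$, and $\widehat{f}(n) = k^{1-s} \zeta(s)$ if $k \mid n$. -/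
/-- The periodic zeta function `F(s,x) = ∑_{n ≥ 1} e^{2πinx} / n^s`. -/
noncomputable def pzeta (s : ℂ) (x : ℝ) : ℂ :=
  ∑' n : ℕ, Complex.exp (2 * (Real.pi : ℂ) * Complex.I * (n + 1) * x) / ((n : ℂ) + 1) ^ s

/-- The Hurwitz zeta function `ζ(s,x) = ∑_{n ≥ 0} (n+x)^{-s}` (for `0 < x ≤ 1`). -/
noncomputable def hzeta (s : ℂ) (x : ℝ) : ℂ :=
  ∑' n : ℕ, 1 / ((n : ℂ) + (x : ℂ)) ^ s

/-!
Expanding `F(s, a/k)` as its Dirichlet series and exchanging the finite sum over `a` with the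
series, the coefficient of `m^{-s}` becomes the character sum `∑_{a<k} e^{2πi a(m-n)/k}`, which is
`k` if `k ∣ m - n` and `0` otherwise. What remains is `k ∑_{m ≡ n (mod k)} m^{-s}`, and writing
`m = kj + R` with `R ∈ {1, …, k}` the residue of `n` turns it into `k^{1-s} ζ(s, R/k)`; here `R/k`
is `{n/k}`, or `1` when `k ∣ n`.
-/

open Complex Finset Real

theorem sum_range_exp_two_pi_I_mul_div_eq_ite {k : ℕ} (hk : k ≠ 0) (c : ℤ) :
    ∑ a ∈ range k, exp (2 * π * I * c * a / k) = if (k : ℤ) ∣ c then (k : ℂ) else 0 := by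
  have hζ := isPrimitiveRoot_exp k hk
  have hterm : ∀ a : ℕ, exp (2 * π * I * c * a / k) = (exp (2 * π * I / k) ^ c) ^ a := fun a => by
    rw [← zpow_natCast, ← zpow_mul, ← exp_int_mul]
    push_cast
    ring_nf
  simp_rw [hterm]
  split_ifs with hc
  · simp [(hζ.zpow_eq_one_iff_dvd c).2 hc]
  · have hw1 : exp (2 * π * I / k) ^ c ≠ 1 := mt (hζ.zpow_eq_one_iff_dvd c).1 hc
    have hwk : (exp (2 * π * I / k) ^ c) ^ k = 1 := by
      rw [← zpow_natCast, ← zpow_mul, hζ.zpow_eq_one_iff_dvd]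
      exact dvd_mul_left _ _
    rw [geom_sum_eq hw1, hwk, sub_self, zero_div]

theorem hasSum_pzeta {s : ℂ} (hs : 1 < s.re) (x : ℝ) :
    HasSum (fun m : ℕ => exp (2 * π * I * (m + 1) * x) / ((m : ℂ) + 1) ^ s) (pzeta s x) := by
  have hsum : Summable fun m : ℕ => ‖1 / ((m : ℂ) + 1) ^ s‖ := by
    simpa using ((summable_nat_add_iff 1).2 (summable_one_div_nat_cpow.2 hs)).norm
  refine (Summable.of_norm_bounded hsum fun m => ?_).hasSum
  rw [norm_div, norm_div, norm_one, norm_exp]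
  simp

theorem dft_pzeta_eq_tsum {k : ℕ} (hk : k ≠ 0) {s : ℂ} (hs : 1 < s.re) (n : ℤ) :
    dft k (fun m => pzeta s ((m : ℝ) / k)) n =
      ∑' m : ℕ, (if (k : ℤ) ∣ (m + 1 - n) then (k : ℂ) else 0) / ((m : ℂ) + 1) ^ s := by
  have h := hasSum_sum fun (a : ℕ) (_ : a ∈ range k) =>
    (hasSum_pzeta hs ((a : ℝ) / k)).mul_right (exp (-(2 * π * I * a * n) / k))
  refine h.tsum_eq.symm.trans (tsum_congr fun m => ?_)
  rw [← sum_range_exp_two_pi_I_mul_div_eq_ite hk, sum_div]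
  refine sum_congr rfl fun a _ => ?_
  rw [div_mul_eq_mul_div, ← Complex.exp_add]
  congr 2
  push_cast
  ring

theorem natCast_div_mul_cpow {k : ℕ} (hk : k ≠ 0) {y : ℝ} (hy : 0 ≤ y) (s : ℂ) :
    (k : ℂ) / ((k * y : ℝ) : ℂ) ^ s = (k : ℂ) ^ (1 - s) * (1 / (y : ℂ) ^ s) := by
  rw [ofReal_mul, mul_cpow_ofReal_nonneg k.cast_nonneg hy, ofReal_natCast,
    cpow_sub _ _ (Nat.cast_ne_zero.2 hk), cpow_one]
  ring

theorem tsum_ite_dvd_div_cpow {k R : ℕ} (hR : 0 < R) (hRk : R ≤ k) {n : ℤ}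
    (hRn : (k : ℤ) ∣ R - n) (s : ℂ) :
    ∑' m : ℕ, (if (k : ℤ) ∣ (m + 1 - n) then (k : ℂ) else 0) / ((m : ℂ) + 1) ^ s =
      (k : ℂ) ^ (1 - s) * hzeta s ((R : ℝ) / k) := by
  obtain ⟨r, rfl⟩ := Nat.exists_eq_add_one_of_ne_zero hR.ne'
  have hk : k ≠ 0 := by omega
  have hinj : Function.Injective fun j : ℕ => k * j + r := fun a b hab =>
    Nat.eq_of_mul_eq_mul_left (Nat.pos_of_ne_zero hk) (Nat.add_right_cancel hab)
  have hsupp : Function.support (fun m : ℕ =>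
      (if (k : ℤ) ∣ (m + 1 - n) then (k : ℂ) else 0) / ((m : ℂ) + 1) ^ s) ⊆
      Set.range fun j : ℕ => k * j + r := by
    intro m hm
    have hmn : (k : ℤ) ∣ m + 1 - n := by
      by_contra h
      simp [h] at hm
    obtain ⟨v, hv⟩ : (k : ℤ) ∣ (m : ℤ) - r := by
      simpa [sub_sub_sub_cancel_right] using dvd_sub hmn hRn
    have hv0 : 0 ≤ v := by nlinarith
    exact ⟨v.toNat, by zify; rw [Int.toNat_of_nonneg hv0]; linarith⟩
  rw [← hinj.tsum_eq hsupp, hzeta, ← tsum_mul_left]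
  refine tsum_congr fun j => ?_
  have hdvd : (k : ℤ) ∣ ((k * j + r : ℕ) : ℤ) + 1 - n := by
    rw [show ((k * j + r : ℕ) : ℤ) + 1 - n = k * j + ((r + 1 : ℕ) - n) by push_cast; ring]
    exact dvd_add (dvd_mul_right _ _) hRn
  have hy : (0 : ℝ) ≤ j + (r + 1 : ℕ) / k := by positivity
  rw [if_pos hdvd]
  convert natCast_div_mul_cpow hk hy s using 3
  · push_cast
    field_simp
    ring
  · push_cast
    ring

theorem dft_pzeta (k : ℕ) (hk : 0 < k) (s : ℂ) (hs : 1 < s.re) (n : ℤ) :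
    dft k (fun m => pzeta s ((m : ℝ) / k)) n =
      if (k : ℤ) ∣ n then (k : ℂ) ^ (1 - s) * hzeta s 1
      else (k : ℂ) ^ (1 - s) * hzeta s (Int.fract ((n : ℝ) / k)) := by
  rw [dft_pzeta_eq_tsum hk.ne' hs]
  split_ifs with hn
  · rw [tsum_ite_dvd_div_cpow hk le_rfl (dvd_sub dvd_rfl hn),
      div_self (Nat.cast_ne_zero.2 hk.ne')]
  · have hkz : (k : ℤ) ≠ 0 := by exact_mod_cast hk.ne'
    have hmod : 0 < n % k := lt_of_le_of_ne (Int.emod_nonneg n hkz)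
      fun h => hn (Int.dvd_of_emod_eq_zero h.symm)
    have hlt : n % k < k := Int.emod_lt_of_pos n (by omega)
    obtain ⟨R, hR⟩ := Int.eq_ofNat_of_zero_le hmod.le
    rw [tsum_ite_dvd_div_cpow (R := R) (by omega) (by omega)
      (hR ▸ (Int.mod_modEq n k).symm.dvd) s, Int.fract_div_intCast_eq_div_intCast_mod, hR]
    rfl
end
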